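/- arXiv:1601.02724 — 2 statements merged into one kernel-verified Lean document; each statement's English description precedes it below -/
import Mathlib

section
/- Let X = (x, y, z) : ℝ → ℝ³ be a solution of the 1-1-1 ABC flow system with X(0) = (-π/2, 0, a) for some a ∈ [0, π/2). Then there exists a time t_a > 0 such that X(t) ∈ D for all t ∈ (0, t_a) and X(t_a) ∈ ∂D; i.e., the orbit exits D in finite positive time. -/
open Real Set Filter

/-- A solution of the 1-1-1 ABC flow system. -/
def IsABCSol (x y z : ℝ → ℝ) : Prop :=
  ∀ t : ℝ,
    HasDerivAt x (Real.sin (z t) + Real.cos (y t)) t ∧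
    HasDerivAt y (Real.sin (x t) + Real.cos (z t)) t ∧
    HasDerivAt z (Real.sin (y t) + Real.cos (x t)) t

/-- The open triangle `R` in the `xy`-plane with vertices `(0, -π/2)`, `(0, 3π/2)`, `(-π, π/2)`. -/
def triR : Set (ℝ × ℝ) :=
  {p | -(Real.pi / 2) < p.1 + p.2 ∧ p.2 - p.1 < 3 * Real.pi / 2 ∧ p.1 < 0}

/-- The open prism `D = R × (0, π/2)` in `ℝ³`. -/
def prismD : Set (ℝ × ℝ × ℝ) :=
  {p | (p.1, p.2.1) ∈ triR ∧ 0 < p.2.2 ∧ p.2.2 < Real.pi / 2}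

open Topology

/-!
While the orbit stays in `D` and moreover satisfies `x > -π/2` and `y < z`, the sum `x + y + z`
grows at rate at least one, since there `sin z + cos z ≥ 1` and `sin x + cos x + sin y + cos y ≥ 0`.
As `x + y + z < π` on this region and `x + y + z = a - π/2 ≥ -π/2` at time `0`, the orbit leaves
the region before time `2π`. It enters the region immediately, and it cannot leave it through the
faces `x = -π/2` or `y = z` while inside `D`, because there `ẋ > 0`, resp. `ż - ẏ > 0`. So its
first exit time from the region is an exit time from `D`.
-/

lemma HasDerivAt.eventually_lt_nhdsGT {f : ℝ → ℝ} {L a : ℝ} (hf : HasDerivAt f L a) (hL : 0 < L) :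
    ∀ᶠ t in 𝓝[>] a, f a < f t := by
  filter_upwards [nhdsGT_le_nhdsNE a ((hasDerivAt_iff_tendsto_slope.1 hf).eventually
    (eventually_gt_nhds hL)), self_mem_nhdsWithin] with t ht (hat : a < t)
  exact (slope_pos_iff hat).1 ht

lemma HasDerivAt.eventually_lt_nhdsLT {f : ℝ → ℝ} {L a : ℝ} (hf : HasDerivAt f L a) (hL : 0 < L) :
    ∀ᶠ t in 𝓝[<] a, f t < f a := by
  filter_upwards [nhdsLT_le_nhdsNE a ((hasDerivAt_iff_tendsto_slope.1 hf).eventually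
    (eventually_gt_nhds hL)), self_mem_nhdsWithin] with t ht (hta : t < a)
  exact (slope_pos_iff_gt hta).1 ht

lemma eventually_lt_nhdsGT_of_eventually_deriv_pos {f f' : ℝ → ℝ} {a : ℝ}
    (hf : ∀ t, HasDerivAt f (f' t) t) (hf' : ∀ᶠ t in 𝓝[>] a, 0 < f' t) :
    ∀ᶠ t in 𝓝[>] a, f a < f t := by
  obtain ⟨b, hab, hb⟩ := mem_nhdsGT_iff_exists_Ioo_subset.1 hf'
  have hmono : StrictMonoOn f (Icc a b) :=
    strictMonoOn_of_hasDerivWithinAt_pos (convex_Icc a b)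
      (HasDerivAt.continuousOn fun t _ => hf t) (fun t _ => (hf t).hasDerivWithinAt)
      (by rw [interior_Icc]; exact hb)
  filter_upwards [Ioo_mem_nhdsGT hab] with t ht
  exact hmono (left_mem_Icc.2 hab.le) (Ioo_subset_Icc_self ht) ht.1

lemma exists_first_exit {α : Type*} [TopologicalSpace α] {γ : ℝ → α} {U : Set α} {a : ℝ}
    (hγ : Continuous γ) (hU : IsOpen U) (h_enter : ∀ᶠ t in 𝓝[>] a, γ t ∈ U)
    (h_exit : ∃ T > a, γ T ∉ U) :
    ∃ τ > a, (∀ t ∈ Ioo a τ, γ t ∈ U) ∧ γ τ ∈ frontier U := by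
  obtain ⟨b, hab, hb⟩ := mem_nhdsGT_iff_exists_Ioo_subset.1 h_enter
  obtain ⟨T, hT, hTU⟩ := h_exit
  set S := Ici b ∩ γ ⁻¹' Uᶜ
  have hTS : T ∈ S := ⟨not_lt.1 fun hTb => hTU (hb ⟨hT, hTb⟩), hTU⟩
  have hSbdd : BddBelow S := ⟨b, fun t ht => ht.1⟩
  have hτS : sInf S ∈ S :=
    (isClosed_Ici.inter (hU.isClosed_compl.preimage hγ)).csInf_mem ⟨T, hTS⟩ hSbdd
  have hτ : a < sInf S := hab.trans_le hτS.1
  have hin : ∀ t ∈ Ioo a (sInf S), γ t ∈ U := by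
    intro t ht
    by_contra hγt
    by_cases htb : t < b
    · exact hγt (hb ⟨ht.1, htb⟩)
    · exact ht.2.not_ge (csInf_le hSbdd ⟨not_lt.1 htb, hγt⟩)
  refine ⟨sInf S, hτ, hin, ?_⟩
  rw [hU.frontier_eq]
  refine ⟨mem_closure_of_tendsto (hγ.continuousWithinAt (s := Iio (sInf S))) ?_, hτS.2⟩
  filter_upwards [Ioo_mem_nhdsLT hτ] using hin

lemma sin_add_one_le_cos_of_mem_Icc {u : ℝ} (hu : u ∈ Icc (-(π / 2)) 0) : sin u + 1 ≤ cos u := by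
  have hs : sin u ≤ 0 := sin_nonpos_of_nonpos_of_neg_pi_le hu.2 (by linarith [hu.1, pi_pos])
  have hc : 0 ≤ cos u := cos_nonneg_of_mem_Icc ⟨hu.1, hu.2.trans (by positivity)⟩
  nlinarith [sin_sq_add_cos_sq u]

lemma one_le_sin_add_cos_of_mem_Icc {u : ℝ} (hu : u ∈ Icc 0 (π / 2)) : 1 ≤ sin u + cos u := by
  have hs : 0 ≤ sin u := sin_nonneg_of_nonneg_of_le_pi hu.1 (by linarith [hu.2, pi_pos])
  have hc : 0 ≤ cos u := cos_nonneg_of_mem_Icc ⟨by linarith [hu.1, pi_pos], hu.2⟩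
  nlinarith [sin_sq_add_cos_sq u]

lemma sin_add_cos_nonneg {s : ℝ} (h₁ : -(π / 4) ≤ s) (h₂ : s ≤ 3 * π / 4) : 0 ≤ sin s + cos s := by
  have h := sin_nonneg_of_nonneg_of_le_pi (x := s + π / 4) (by linarith) (by linarith)
  rw [sin_add, cos_pi_div_four, sin_pi_div_four, ← add_mul] at h
  exact nonneg_of_mul_nonneg_left h (by positivity)

lemma sin_add_cos_add_sin_add_cos_nonneg {u v : ℝ} (hu : u ∈ Icc (-(π / 2)) 0)
    (hv : v ≤ π / 2) (huv : -(π / 2) ≤ u + v) : 0 ≤ sin u + cos u + (sin v + cos v) := by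
  have hc : 0 ≤ cos ((u - v) / 2) := cos_nonneg_of_mem_Icc ⟨by linarith [hu.1], by linarith [hu.2]⟩
  have hs := sin_add_cos_nonneg (s := (u + v) / 2) (by linarith) (by linarith [hu.2, pi_pos])
  calc 0 ≤ 2 * (sin ((u + v) / 2) + cos ((u + v) / 2)) * cos ((u - v) / 2) := by positivity
    _ = sin u + cos u + (sin v + cos v) := by rw [add_add_add_comm, sin_add_sin, cos_add_cos]; ring

lemma one_le_sum_abc_field {x y z : ℝ} (hx : x ∈ Icc (-(π / 2)) 0) (hxy : -(π / 2) ≤ x + y)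
    (hyz : y ≤ z) (hz : z ∈ Icc 0 (π / 2)) :
    1 ≤ sin z + cos y + (sin x + cos z) + (sin y + cos x) := by
  linarith [one_le_sin_add_cos_of_mem_Icc hz,
    sin_add_cos_add_sin_add_cos_nonneg hx (hyz.trans hz.2) hxy]

def growthRegion : Set (ℝ × ℝ × ℝ) :=
  {p | p ∈ prismD ∧ -(π / 2) < p.1 ∧ p.2.1 < p.2.2}

lemma mem_prismD {p q r : ℝ} : (p, q, r) ∈ prismD ↔
    (-(π / 2) < p + q ∧ q - p < 3 * π / 2 ∧ p < 0) ∧ 0 < r ∧ r < π / 2 :=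
  Iff.rfl

lemma mem_growthRegion {p q r : ℝ} :
    (p, q, r) ∈ growthRegion ↔ (p, q, r) ∈ prismD ∧ -(π / 2) < p ∧ q < r :=
  Iff.rfl

lemma isOpen_prismD : IsOpen prismD := by
  simp only [prismD, triR, ofPred_and]
  refine ((isOpen_lt ?_ ?_).inter ((isOpen_lt ?_ ?_).inter (isOpen_lt ?_ ?_))).inter
    ((isOpen_lt ?_ ?_).inter (isOpen_lt ?_ ?_)) <;> fun_prop

lemma isOpen_growthRegion : IsOpen growthRegion :=
  isOpen_prismD.inter ((isOpen_lt continuous_const continuous_fst).inter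
    (isOpen_lt (f := fun p : ℝ × ℝ × ℝ => p.2.1) (by fun_prop) (by fun_prop)))

namespace IsABCSol

variable {x y z : ℝ → ℝ}

lemma continuous_x (h : IsABCSol x y z) : Continuous x :=
  continuous_iff_continuousAt.2 fun t => (h t).1.continuousAt

lemma continuous_y (h : IsABCSol x y z) : Continuous y :=
  continuous_iff_continuousAt.2 fun t => (h t).2.1.continuousAt

lemma continuous_z (h : IsABCSol x y z) : Continuous z :=
  continuous_iff_continuousAt.2 fun t => (h t).2.2.continuousAt

/-- For `a = 0`, `ż` and `ż - ẏ` vanish at `t = 0`, so these signs come from second derivatives. -/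
lemma eventually_pos_z_and_lt_z (h : IsABCSol x y z) {a : ℝ} (ha : a ∈ Ico 0 (π / 2))
    (hx0 : x 0 = -(π / 2)) (hy0 : y 0 = 0) (hz0 : z 0 = a) :
    ∀ᶠ t in 𝓝[>] 0, 0 < z t ∧ y t < z t := by
  have hsa : 0 ≤ sin a := sin_nonneg_of_nonneg_of_le_pi ha.1 (by linarith [ha.2, pi_pos])
  have hca : 0 < cos a := cos_pos_of_mem_Ioo ⟨by linarith [ha.1, pi_pos], ha.2⟩
  have hw := fun t => (h t).2.1.sin.add (h t).1.cos
  have hw₀ : 0 < cos (y 0) * (sin (x 0) + cos (z 0)) + -sin (x 0) * (sin (z 0) + cos (y 0)) := by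
    rw [hx0, hy0, hz0, cos_zero, sin_neg, sin_pi_div_two]; linarith
  have hz : ∀ᶠ t in 𝓝[>] 0, z 0 < z t := by
    refine eventually_lt_nhdsGT_of_eventually_deriv_pos (fun t => (h t).2.2) ?_
    filter_upwards [(hw 0).eventually_lt_nhdsGT hw₀] with t ht
    simpa [hx0, hy0] using ht
  have hzy : ∀ᶠ t in 𝓝[>] 0, z 0 - y 0 < z t - y t := by
    refine eventually_lt_nhdsGT_of_eventually_deriv_pos (fun t => (h t).2.2.sub (h t).2.1) ?_
    filter_upwards [((hw 0).sub ((h 0).1.sin.add (h 0).2.2.cos)).eventually_lt_nhdsGT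
      (by rw [hx0, hy0, hz0, sin_zero, cos_zero, sin_neg, cos_neg, sin_pi_div_two, cos_pi_div_two]
          linarith)] with t ht
    simp only [Pi.add_apply, Pi.sub_apply, hx0, hy0, hz0, sin_zero, sin_neg, sin_pi_div_two,
      cos_neg, cos_pi_div_two] at ht
    linarith [cos_le_one a]
  filter_upwards [hz, hzy] with t hzt hzyt
  rw [hy0, hz0] at *
  exact ⟨by linarith [ha.1], by linarith [ha.1]⟩

lemma eventually_mem_growthRegion (h : IsABCSol x y z) {a : ℝ} (ha : a ∈ Ico 0 (π / 2))
    (hx0 : x 0 = -(π / 2)) (hy0 : y 0 = 0) (hz0 : z 0 = a) :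
    ∀ᶠ t in 𝓝[>] 0, (x t, y t, z t) ∈ growthRegion := by
  have hsa : 0 ≤ sin a := sin_nonneg_of_nonneg_of_le_pi ha.1 (by linarith [ha.2, pi_pos])
  have hca : 0 < cos a := cos_pos_of_mem_Ioo ⟨by linarith [ha.1, pi_pos], ha.2⟩
  have hx : ∀ᶠ t in 𝓝[>] 0, x 0 < x t :=
    (h 0).1.eventually_lt_nhdsGT (by rw [hy0, hz0, cos_zero]; linarith)
  have hxy : ∀ᶠ t in 𝓝[>] 0, x 0 + y 0 < x t + y t :=
    ((h 0).1.add (h 0).2.1).eventually_lt_nhdsGT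
      (by rw [hx0, hy0, hz0, cos_zero, sin_neg, sin_pi_div_two]; linarith)
  have hyx : ∀ᶠ t in 𝓝[>] (0 : ℝ), y t - x t < 3 * π / 2 :=
    ((h.continuous_y.sub h.continuous_x).tendsto 0).mono_left nhdsWithin_le_nhds
      |>.eventually_lt_const (by rw [Pi.sub_apply, hx0, hy0]; linarith [pi_pos])
  have hx' : ∀ᶠ t in 𝓝[>] (0 : ℝ), x t < 0 :=
    (h.continuous_x.tendsto 0).mono_left nhdsWithin_le_nhds
      |>.eventually_lt_const (by rw [hx0]; linarith [pi_pos])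
  have hz' : ∀ᶠ t in 𝓝[>] (0 : ℝ), z t < π / 2 :=
    (h.continuous_z.tendsto 0).mono_left nhdsWithin_le_nhds |>.eventually_lt_const (hz0 ▸ ha.2)
  filter_upwards [hx, hxy, hyx, hx', h.eventually_pos_z_and_lt_z ha hx0 hy0 hz0, hz']
    with t hxt hxyt hyxt hxt' ⟨hzt, hyzt⟩ hzt'
  rw [hx0, hy0] at *
  exact mem_growthRegion.2 ⟨⟨⟨by linarith, hyxt, hxt'⟩, hzt, hzt'⟩, hxt, hyzt⟩

lemma exists_notMem_growthRegion (h : IsABCSol x y z) (h₀ : -(π / 2) ≤ x 0 + y 0 + z 0) :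
    ∃ T > 0, (x T, y T, z T) ∉ growthRegion := by
  by_contra! hG
  have hp (t : ℝ) : HasDerivAt (fun t => x t + y t + z t)
      (sin (z t) + cos (y t) + (sin (x t) + cos (z t)) + (sin (y t) + cos (x t))) t :=
    ((h t).1.add (h t).2.1).add (h t).2.2
  have hp' (t : ℝ) (ht : t ∈ interior (Ici 0)) : 1 ≤ deriv (fun t => x t + y t + z t) t := by
    obtain ⟨⟨⟨hxy, -, hx⟩, hz₀, hz₁⟩, hx', hyz⟩ := by
      simpa only [mem_growthRegion, mem_prismD] using hG t (interior_Ici.subset ht)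
    rw [(hp t).deriv]
    exact one_le_sum_abc_field ⟨hx'.le, hx.le⟩ hxy.le hyz.le ⟨hz₀.le, hz₁.le⟩
  have hgrowth := (convex_Ici (0 : ℝ)).mul_sub_le_image_sub_of_le_deriv
    (HasDerivAt.continuousOn fun t _ => hp t)
    (fun t _ => (hp t).differentiableAt.differentiableWithinAt) hp'
    0 self_mem_Ici (2 * π) (mem_Ici.2 (by positivity)) (by positivity)
  obtain ⟨⟨⟨-, -, hx⟩, -, hz⟩, -, hyz⟩ := by
    simpa only [mem_growthRegion, mem_prismD] using hG (2 * π) (by positivity)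
  linarith [pi_pos]

lemma notMem_prismD_of_eventually_mem_growthRegion (h : IsABCSol x y z) {τ : ℝ}
    (hin : ∀ᶠ t in 𝓝[<] τ, (x t, y t, z t) ∈ growthRegion)
    (hτ : (x τ, y τ, z τ) ∉ growthRegion) : (x τ, y τ, z τ) ∉ prismD := by
  intro hD
  obtain ⟨⟨hxy, -, hx⟩, hz₀, hz₁⟩ := mem_prismD.1 hD
  have hx' : -(π / 2) ≤ x τ := ge_of_tendsto (h.continuous_x.continuousWithinAt)
    (hin.mono fun t ht => (mem_growthRegion.1 ht).2.1.le)
  have hyz : y τ ≤ z τ := le_of_tendsto_of_tendsto h.continuous_y.continuousWithinAt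
    h.continuous_z.continuousWithinAt (hin.mono fun t ht => (mem_growthRegion.1 ht).2.2.le)
  rcases hx'.eq_or_lt with hxτ | hxτ
  · have hxdot : 0 < sin (z τ) + cos (y τ) := add_pos_of_pos_of_nonneg
      (sin_pos_of_pos_of_lt_pi hz₀ (by linarith [pi_pos]))
      (cos_nonneg_of_mem_Icc ⟨by linarith, by linarith⟩)
    obtain ⟨t, hxt, ht⟩ := ((h τ).1.eventually_lt_nhdsLT hxdot).and hin |>.exists
    linarith [(mem_growthRegion.1 ht).2.1]
  rcases hyz.eq_or_lt with hyzτ | hyzτ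
  · have hzydot : 0 < sin (y τ) + cos (x τ) - (sin (x τ) + cos (z τ)) := by
      linarith [sin_add_one_le_cos_of_mem_Icc ⟨hx', hx.le⟩, cos_le_one (z τ),
        sin_pos_of_pos_of_lt_pi (hyzτ ▸ hz₀) (by linarith [pi_pos])]
    obtain ⟨t, hzyt, ht⟩ :=
      (((h τ).2.2.sub (h τ).2.1).eventually_lt_nhdsLT hzydot).and hin |>.exists
    rw [Pi.sub_apply, Pi.sub_apply] at hzyt
    linarith [(mem_growthRegion.1 ht).2.2]
  exact hτ ⟨hD, hxτ, hyzτ⟩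

end IsABCSol

theorem stmt11 (x y z : ℝ → ℝ) (h : IsABCSol x y z) (a : ℝ) (ha : a ∈ Set.Ico 0 (π / 2))
    (hx0 : x 0 = -(π / 2)) (hy0 : y 0 = 0) (hz0 : z 0 = a) :
    ∃ tₐ > (0 : ℝ), (∀ t ∈ Set.Ioo 0 tₐ, (x t, y t, z t) ∈ prismD) ∧
      (x tₐ, y tₐ, z tₐ) ∈ frontier prismD := by
  obtain ⟨τ, hτ, hin, hfr⟩ := exists_first_exit (γ := fun t => (x t, y t, z t))
    (h.continuous_x.prodMk (h.continuous_y.prodMk h.continuous_z)) isOpen_growthRegion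
    (h.eventually_mem_growthRegion ha hx0 hy0 hz0)
    (h.exists_notMem_growthRegion (by rw [hx0, hy0, hz0]; linarith [ha.1]))
  rw [isOpen_growthRegion.frontier_eq] at hfr
  refine ⟨τ, hτ, fun t ht => (hin t ht).1, ?_⟩
  rw [isOpen_prismD.frontier_eq]
  exact ⟨closure_mono (fun p hp => hp.1) hfr.1, h.notMem_prismD_of_eventually_mem_growthRegion
    (eventually_of_mem (Ioo_mem_nhdsLT hτ) hin) hfr.2⟩
end

section
/- Let X = (x, y, z) : ℝ → ℝ³ be a solution of the 1-1-1 ABC flow system and let t₀ ∈ ℝ satisfy x(t₀) = 0 and z(t₀) = π/2. Then for every t ∈ ℝ one has x(2t₀ - t) = -x(t), y(2t₀ - t) = y(t), and z(2t₀ - t) = π - z(t). -/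
open Real Set Filter

/-!
The map `(x, y, z) ↦ (-x, y, π - z)` reverses the ABC vector field, so composing it with the time
reflection `t ↦ 2 t₀ - t` sends solutions to solutions. Its fixed points are exactly those with
`x = 0` and `z = π / 2`, so when `X(t₀)` is such a point the reflected solution has the same value
as `X` at time `t₀`. The ABC field is Lipschitz, hence solutions are determined by one value, and
the reflected solution is `X` itself.
-/

noncomputable def abcField (p : ℝ × ℝ × ℝ) : ℝ × ℝ × ℝ :=
  (sin p.2.2 + cos p.2.1, sin p.1 + cos p.2.2, sin p.2.1 + cos p.1)

lemma lipschitzWith_abcField : LipschitzWith 2 abcField := by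
  have sin_add_cos {f g : ℝ × ℝ × ℝ → ℝ} (hf : LipschitzWith 1 f) (hg : LipschitzWith 1 g) :
      LipschitzWith 2 fun p => sin (f p) + cos (g p) := by
    have := (lipschitzWith_sin.comp hf).add (lipschitzWith_cos.comp hg)
    rwa [mul_one, one_add_one_eq_two] at this
  have h₁ : LipschitzWith 1 fun p : ℝ × ℝ × ℝ => p.1 := LipschitzWith.prod_fst
  have h₂ : LipschitzWith 1 fun p : ℝ × ℝ × ℝ => p.2.1 := by
    have := LipschitzWith.prod_fst.comp (LipschitzWith.prod_snd (α := ℝ) (β := ℝ × ℝ))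
    rwa [mul_one] at this
  have h₃ : LipschitzWith 1 fun p : ℝ × ℝ × ℝ => p.2.2 := by
    have := LipschitzWith.prod_snd.comp (LipschitzWith.prod_snd (α := ℝ) (β := ℝ × ℝ))
    rwa [mul_one] at this
  have := (sin_add_cos h₃ h₂).prodMk ((sin_add_cos h₁ h₃).prodMk (sin_add_cos h₂ h₁))
  rwa [max_self, max_self] at this

section

variable {x y z : ℝ → ℝ}

lemma IsABCSol.hasDerivAt_abcField (h : IsABCSol x y z) (t : ℝ) :
    HasDerivAt (fun t => (x t, y t, z t)) (abcField (x t, y t, z t)) t :=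
  (h t).1.prodMk ((h t).2.1.prodMk (h t).2.2)

lemma IsABCSol.eq_of_eq_at {x' y' z' : ℝ → ℝ} (h : IsABCSol x y z) (h' : IsABCSol x' y' z')
    {t₀ : ℝ} (hx : x t₀ = x' t₀) (hy : y t₀ = y' t₀) (hz : z t₀ = z' t₀) (t : ℝ) :
    x t = x' t ∧ y t = y' t ∧ z t = z' t := by
  have hX := ODE_solution_unique_univ (v := fun _ => abcField) (s := fun _ => univ)
    (fun _ => lipschitzWith_abcField.lipschitzOnWith)
    (fun t => ⟨h.hasDerivAt_abcField t, mem_univ _⟩)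
    (fun t => ⟨h'.hasDerivAt_abcField t, mem_univ _⟩) (t₀ := t₀) (by simp [hx, hy, hz])
  simpa using congrFun hX t

lemma IsABCSol.reflect (h : IsABCSol x y z) (c : ℝ) :
    IsABCSol (fun t => -x (c - t)) (fun t => y (c - t)) (fun t => π - z (c - t)) := by
  intro t
  have hr : HasDerivAt (fun t => c - t) (-1) t := by
    simpa using (hasDerivAt_id t).const_sub c
  obtain ⟨hx, hy, hz⟩ := h (c - t)
  refine ⟨?_, ?_, ?_⟩
  · refine (hx.comp t hr).neg.congr_deriv ?_
    rw [sin_pi_sub]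
    ring
  · refine (hy.comp t hr).congr_deriv ?_
    rw [sin_neg, cos_pi_sub]
    ring
  · refine ((hz.comp t hr).const_sub π).congr_deriv ?_
    rw [cos_neg]
    ring

end

theorem stmt16 (x y z : ℝ → ℝ) (h : IsABCSol x y z) (t₀ : ℝ)
    (hx : x t₀ = 0) (hz : z t₀ = π / 2) :
    ∀ t : ℝ, x (2 * t₀ - t) = -x t ∧ y (2 * t₀ - t) = y t ∧
      z (2 * t₀ - t) = π - z t := by
  have hfix : 2 * t₀ - t₀ = t₀ := by ring
  intro t
  obtain ⟨hxt, hyt, hzt⟩ := (h.reflect (2 * t₀)).eq_of_eq_at h (t₀ := t₀)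
    (by simp [hfix, hx]) (by simp [hfix]) (by simp only [hfix, hz]; ring) t
  exact ⟨by linarith, hyt, by linarith⟩
end
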